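/- A real number θ is a root of μ(G) if and only if there exists a vertex j with m_θ(G∖j) = m_θ(G) − 1 (i.e., the set 0_{θ,G} of θ-essential vertices is nonempty). -/

import Mathlib

open Polynomial
open scoped Classical

/-- A matching of the weighted graph with edge weights `lam`, inside the vertex set `A`:
a set of pairs `(j,k)` with `j < k`, `lam j k ≠ 0`, endpoints in `A`,
no two pairs sharing a vertex. -/
def IsMatching {n : ℕ} (lam : Fin n → Fin n → ℝ) (A : Finset (Fin n))
    (M : Finset (Fin n × Fin n)) : Prop :=
  (∀ e ∈ M, e.1 < e.2 ∧ lam e.1 e.2 ≠ 0 ∧ e.1 ∈ A ∧ e.2 ∈ A) ∧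
  ∀ e ∈ M, ∀ f ∈ M, e ≠ f → e.1 ≠ f.1 ∧ e.1 ≠ f.2 ∧ e.2 ≠ f.1 ∧ e.2 ≠ f.2

/-- The vertices covered by a matching. -/
def mVerts {n : ℕ} (M : Finset (Fin n × Fin n)) : Finset (Fin n) :=
  M.image Prod.fst ∪ M.image Prod.snd

/-- The finite set of matchings inside the vertex set `A`. -/
noncomputable def matchings {n : ℕ} (lam : Fin n → Fin n → ℝ) (A : Finset (Fin n)) :
    Finset (Finset (Fin n × Fin n)) :=
  Finset.univ.filter fun M => IsMatching lam A M

/-- The weighted matching polynomial of the induced weighted subgraph on the vertex set `A`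
(the matching polynomial of the empty graph is `1`). -/
noncomputable def mu {n : ℕ} (r : Fin n → ℝ) (lam : Fin n → Fin n → ℝ)
    (A : Finset (Fin n)) : Polynomial ℝ :=
  ∑ M ∈ matchings lam A,
    (∏ i ∈ A \ mVerts M, (X - C (r i))) * C (∏ e ∈ M, lam e.1 e.2)

/-- The multivariate matching polynomial evaluated at the complex numbers `x 1, …, x n`. -/
noncomputable def muC {n : ℕ} (lam : Fin n → Fin n → ℝ) (x : Fin n → ℂ) : ℂ :=
  ∑ M ∈ matchings lam (Finset.univ : Finset (Fin n)),
    (∏ i ∈ Finset.univ \ mVerts M, x i) * ∏ e ∈ M, (lam e.1 e.2 : ℂ)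

/-- The constant `B_G`: for `n ≥ 3` the maximum over vertices `j` and sets
`A ⊆ [n] ∖ {j}` with `|A| = n - 2` of `∑_{k ∈ A} (-λ_{jk})`; `-λ_{12}/4` for `n = 2`;
`0` for `n = 1`. -/
noncomputable def BG (n : ℕ) (lam : Fin n → Fin n → ℝ) : ℝ :=
  if 3 ≤ n then
    sSup {S : ℝ | ∃ j : Fin n, ∃ A : Finset (Fin n),
      j ∉ A ∧ A.card = n - 2 ∧ S = ∑ k ∈ A, -lam j k}
  else if h : n = 2 then -lam ⟨0, by omega⟩ ⟨1, by omega⟩ / 4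
  else 0

/-- `l` is a path from `i` to `j` inside the vertex set `A`: a nonempty list of distinct
vertices of `A`, starting at `i`, ending at `j`, with consecutive vertices joined by
edges of nonzero weight. -/
def IsPathIn {n : ℕ} (lam : Fin n → Fin n → ℝ) (A : Finset (Fin n)) (i j : Fin n)
    (l : List (Fin n)) : Prop :=
  l ≠ [] ∧ l.Nodup ∧ (∀ v ∈ l, v ∈ A) ∧ l.head? = some i ∧ l.getLast? = some j ∧
    l.Chain' fun u v => lam u v ≠ 0

/-- `λ_c`: the product of `-λ_e` over the edges `e` of the path `c` (equal to `1` for a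
trivial path). -/
def pathWeight {n : ℕ} (lam : Fin n → Fin n → ℝ) (l : List (Fin n)) : ℝ :=
  ((l.zip l.tail).map fun p => -lam p.1 p.2).prod

/-- A real polynomial viewed as a rational function. -/
noncomputable def toRF (p : Polynomial ℝ) : RatFunc ℝ :=
  algebraMap (Polynomial ℝ) (RatFunc ℝ) p

/-- The graph continued fraction `α_v = μ(A)/μ(A ∖ v)` as a rational function. -/
noncomputable def alpha {n : ℕ} (r : Fin n → ℝ) (lam : Fin n → Fin n → ℝ) (v : Fin n)
    (A : Finset (Fin n)) : RatFunc ℝ :=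
  toRF (mu r lam A) / toRF (mu r lam (A.erase v))

/-- `λ_{i∼j} = -(∑_{c ∈ [i→j]} λ_c · μ(A∖c)²) / μ(A∖{i,j})²` as a rational function. -/
noncomputable def lamSim {n : ℕ} (r : Fin n → ℝ) (lam : Fin n → Fin n → ℝ) (i j : Fin n)
    (A : Finset (Fin n)) : RatFunc ℝ :=
  -(∑ᶠ l ∈ {l : List (Fin n) | IsPathIn lam A i j l},
      toRF (C (pathWeight lam l) * mu r lam (A \ l.toFinset) ^ 2)) /
    toRF (mu r lam ((A.erase i).erase j)) ^ 2

/-- The value of a rational function at `θ`, taken after cancelling common factors;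
`none` encodes the value `∞` (a pole). -/
noncomputable def valAt (f : RatFunc ℝ) (θ : ℝ) : Option ℝ :=
  if f.denom.eval θ = 0 then none else some (f.num.eval θ / f.denom.eval θ)

/-- The set `0_{θ,A}` of θ-essential vertices: `m_θ(A∖v) = m_θ(A) - 1`. -/
def zeroSet {n : ℕ} (r : Fin n → ℝ) (lam : Fin n → Fin n → ℝ) (θ : ℝ)
    (A : Finset (Fin n)) : Set (Fin n) :=
  {v | v ∈ A ∧
    (mu r lam A).rootMultiplicity θ = (mu r lam (A.erase v)).rootMultiplicity θ + 1}

/-- The set `∞_{θ,A}`: `m_θ(A∖v) = m_θ(A) + 1`. -/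
def infSet {n : ℕ} (r : Fin n → ℝ) (lam : Fin n → Fin n → ℝ) (θ : ℝ)
    (A : Finset (Fin n)) : Set (Fin n) :=
  {v | v ∈ A ∧
    (mu r lam (A.erase v)).rootMultiplicity θ = (mu r lam A).rootMultiplicity θ + 1}

/-- The set `+_{θ,A}`: `m_θ(A∖v) = m_θ(A)` and `α_v(A)(θ) > 0`. -/
def plusSet {n : ℕ} (r : Fin n → ℝ) (lam : Fin n → Fin n → ℝ) (θ : ℝ)
    (A : Finset (Fin n)) : Set (Fin n) :=
  {v | v ∈ A ∧
    (mu r lam (A.erase v)).rootMultiplicity θ = (mu r lam A).rootMultiplicity θ ∧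
    ∃ t : ℝ, valAt (alpha r lam v A) θ = some t ∧ 0 < t}

/-- The set `−_{θ,A}`: `m_θ(A∖v) = m_θ(A)` and `α_v(A)(θ) < 0`. -/
def minusSet {n : ℕ} (r : Fin n → ℝ) (lam : Fin n → Fin n → ℝ) (θ : ℝ)
    (A : Finset (Fin n)) : Set (Fin n) :=
  {v | v ∈ A ∧
    (mu r lam (A.erase v)).rootMultiplicity θ = (mu r lam A).rootMultiplicity θ ∧
    ∃ t : ℝ, valAt (alpha r lam v A) θ = some t ∧ t < 0}

/-- The frontier `∂0_{θ,A}`: vertices not in `0_{θ,A}` with a neighbor in `0_{θ,A}`. -/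
def frontierZero {n : ℕ} (r : Fin n → ℝ) (lam : Fin n → Fin n → ℝ) (θ : ℝ)
    (A : Finset (Fin n)) : Set (Fin n) :=
  {v | v ∈ A ∧ v ∉ zeroSet r lam θ A ∧ ∃ w ∈ zeroSet r lam θ A, lam v w ≠ 0}

/-- The underlying simple graph: edges are the pairs with nonzero edge weight. -/
def wGraph {n : ℕ} (lam : Fin n → Fin n → ℝ) : SimpleGraph (Fin n) :=
  SimpleGraph.fromRel fun j k => lam j k ≠ 0

/-!
Deleting a vertex lowers the multiplicity of `θ` by at most one. This is the Heilmann–Lieb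
argument: the three-term recurrence `μ(A) = (x - r_u) μ(A ∖ u) + ∑_k λ_{uk} μ(A ∖ {u, k})`
shows inductively that the Wronskian `W(μ(A ∖ u), μ(A))` dominates `μ(A ∖ u)²`, which forbids
`μ(A)` from vanishing at `θ` to order two more than `μ(A ∖ u)`. If no vertex were essential,
`(x - θ)^{m_θ(A)}` would therefore divide every `μ(A ∖ j)`, hence `μ(A)' = ∑_j μ(A ∖ j)`,
which is impossible at a root.
-/

open Finset

def sortedPair {α : Type*} [LinearOrder α] (a b : α) : α × α := (min a b, max a b)

section SortedPair

variable {α : Type*} [LinearOrder α] {a b c : α}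

lemma sortedPair_fst_lt_snd (h : a ≠ b) : (sortedPair a b).1 < (sortedPair a b).2 :=
  min_lt_max.2 h

lemma sortedPair_fst_eq_or_snd_eq : (sortedPair a b).1 = a ∨ (sortedPair a b).2 = a := by
  rcases le_total a b with h | h <;> simp [sortedPair, h]

lemma sortedPair_eq_of_lt {e : α × α} (he : e.1 < e.2) :
    e = sortedPair e.1 e.2 ∧ e = sortedPair e.2 e.1 := by
  simp [sortedPair, he.le]

lemma sortedPair_injective (h : sortedPair a b = sortedPair a c) : b = c := by
  simp only [sortedPair, Prod.mk.injEq, min_def, max_def] at h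
  split_ifs at h <;> grind

lemma apply_sortedPair {β : Type*} {f : α → α → β} (hf : ∀ a b, f a b = f b a) :
    f (sortedPair a b).1 (sortedPair a b).2 = f a b := by
  rcases le_total a b with h | h <;> simp [sortedPair, h, hf b a]

lemma erase_erase_sortedPair [DecidableEq α] (s : Finset α) :
    (s.erase (sortedPair a b).1).erase (sortedPair a b).2 = (s.erase a).erase b := by
  rcases le_total a b with h | h <;> simp [sortedPair, h, Finset.erase_right_comm]

end SortedPair

section Matchings

variable {n : ℕ} {lam : Fin n → Fin n → ℝ} {A : Finset (Fin n)}
  {M : Finset (Fin n × Fin n)} {e f : Fin n × Fin n} {u v : Fin n}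

lemma mem_matchings : M ∈ matchings lam A ↔ IsMatching lam A M := by
  simp [matchings]

lemma mem_mVerts : v ∈ mVerts M ↔ ∃ e ∈ M, e.1 = v ∨ e.2 = v := by
  simp only [mVerts, mem_union, mem_image]
  grind

lemma mVerts_insert : mVerts (insert e M) = insert e.1 (insert e.2 (mVerts M)) := by
  simp only [mVerts, image_insert, insert_union, union_insert, Finset.insert_comm]

lemma IsMatching.mem_of_mem_mVerts (hM : IsMatching lam A M) (hv : v ∈ mVerts M) : v ∈ A := by
  obtain ⟨e, he, rfl | rfl⟩ := mem_mVerts.1 hv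
  exacts [(hM.1 e he).2.2.1, (hM.1 e he).2.2.2]

lemma IsMatching.eq_of_mem_of_mem (hM : IsMatching lam A M) (he : e ∈ M) (hf : f ∈ M)
    (hev : e.1 = v ∨ e.2 = v) (hfv : f.1 = v ∨ f.2 = v) : e = f := by
  by_contra hne
  have := hM.2 e he f hf hne
  grind

lemma matchings_erase :
    matchings lam (A.erase u) = (matchings lam A).filter (u ∉ mVerts ·) := by
  ext M
  simp only [mem_filter, mem_matchings, IsMatching, mem_mVerts, mem_erase]
  grind

lemma empty_mem_matchings : (∅ : Finset (Fin n × Fin n)) ∈ matchings lam A :=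
  mem_matchings.2 ⟨by simp, by simp⟩

/-- Adding and removing the edge `e` identify the matchings of `A` through `e` with the
matchings of `A` minus both endpoints of `e`. -/
lemma IsMatching.erase_edge (hM : IsMatching lam A M) (he : e ∈ M) :
    IsMatching lam ((A.erase e.1).erase e.2) (M.erase e) := by
  refine ⟨fun f hf => ?_, fun f hf g hg => hM.2 f (mem_of_mem_erase hf) g (mem_of_mem_erase hg)⟩
  have := hM.2 f (mem_of_mem_erase hf) e he (mem_erase.1 hf).1
  have := hM.1 f (mem_of_mem_erase hf)
  simp only [mem_erase]
  grind

lemma IsMatching.insert_edge (he : IsMatching lam A {e})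
    (hM : IsMatching lam ((A.erase e.1).erase e.2) M) : IsMatching lam A (insert e M) := by
  have hMe := hM.1
  simp only [mem_erase] at hMe
  refine ⟨fun f hf => ?_, fun f hf g hg => ?_⟩
  · rcases mem_insert.1 hf with rfl | hf
    · exact he.1 f (mem_singleton_self f)
    · grind
  · have hMd := hM.2
    rcases mem_insert.1 hf with rfl | hf <;> rcases mem_insert.1 hg with rfl | hg <;> grind

lemma sum_matchings_filter_mem {R : Type*} [AddCommMonoid R] (g : Finset (Fin n × Fin n) → R)
    (he : IsMatching lam A {e}) :
    ∑ M ∈ (matchings lam A).filter (e ∈ ·), g M =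
      ∑ M ∈ matchings lam ((A.erase e.1).erase e.2), g (insert e M) := by
  refine sum_nbij' (·.erase e) (insert e) (fun M hM => ?_) (fun M hM => ?_)
    (fun M hM => insert_erase (mem_filter.1 hM).2) (fun M hM => erase_insert fun heM => ?_)
    (fun M hM => by rw [insert_erase (mem_filter.1 hM).2])
  · obtain ⟨hM, heM⟩ := mem_filter.1 hM
    exact mem_matchings.2 ((mem_matchings.1 hM).erase_edge heM)
  · exact mem_filter.2 ⟨mem_matchings.2 (he.insert_edge (mem_matchings.1 hM)),
      mem_insert_self e M⟩
  · simpa using ((mem_matchings.1 hM).1 e heM).2.2.1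

end Matchings

section Recurrence

variable {n : ℕ} {r : Fin n → ℝ} {lam : Fin n → Fin n → ℝ} {A : Finset (Fin n)} {u : Fin n}

lemma filter_mem_mVerts_eq_biUnion :
    (matchings lam A).filter (u ∈ mVerts ·) =
      (A.erase u).biUnion fun k => (matchings lam A).filter (sortedPair u k ∈ ·) := by
  ext M
  simp only [mem_filter, mem_biUnion, mem_erase]
  constructor
  · rintro ⟨hM, hu⟩
    obtain ⟨e, he, heu⟩ := mem_mVerts.1 hu
    obtain ⟨hlt, -, he1, he2⟩ := (mem_matchings.1 hM).1 e he
    rcases heu with rfl | rfl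
    · exact ⟨e.2, ⟨hlt.ne', he2⟩, hM, (sortedPair_eq_of_lt hlt).1 ▸ he⟩
    · exact ⟨e.1, ⟨hlt.ne, he1⟩, hM, (sortedPair_eq_of_lt hlt).2 ▸ he⟩
  · rintro ⟨k, -, hM, hk⟩
    exact ⟨hM, mem_mVerts.2 ⟨_, hk, sortedPair_fst_eq_or_snd_eq⟩⟩

lemma pairwiseDisjoint_filter_mem_sortedPair :
    (A.erase u : Set (Fin n)).PairwiseDisjoint
      fun k => (matchings lam A).filter (sortedPair u k ∈ ·) := by
  intro k _ k' _ hkk'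
  refine disjoint_filter.2 fun M hM hk hk' => hkk' (sortedPair_injective (a := u) ?_)
  exact (mem_matchings.1 hM).eq_of_mem_of_mem hk hk' sortedPair_fst_eq_or_snd_eq
    sortedPair_fst_eq_or_snd_eq

noncomputable def matchingTerm (r : Fin n → ℝ) (lam : Fin n → Fin n → ℝ) (A : Finset (Fin n))
    (M : Finset (Fin n × Fin n)) : ℝ[X] :=
  (∏ i ∈ A \ mVerts M, (X - C (r i))) * C (∏ e ∈ M, lam e.1 e.2)

lemma mu_eq_sum_matchingTerm : mu r lam A = ∑ M ∈ matchings lam A, matchingTerm r lam A M :=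
  rfl

lemma sum_matchingTerm_filter_not_mem_mVerts (hu : u ∈ A) :
    ∑ M ∈ (matchings lam A).filter (u ∉ mVerts ·), matchingTerm r lam A M =
      (X - C (r u)) * mu r lam (A.erase u) := by
  rw [← matchings_erase, mu, mul_sum]
  refine sum_congr rfl fun M hM => ?_
  have hu' : u ∈ A \ mVerts M :=
    mem_sdiff.2 ⟨hu, fun h => (mem_erase.1 ((mem_matchings.1 hM).mem_of_mem_mVerts h)).1 rfl⟩
  rw [matchingTerm, ← mul_prod_erase _ _ hu', erase_sdiff_comm, mul_assoc]

lemma sum_matchingTerm_filter_mem_sortedPair (hsym : ∀ j k, lam j k = lam k j) (hu : u ∈ A)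
    {k : Fin n} (hk : k ∈ A.erase u) :
    ∑ M ∈ (matchings lam A).filter (sortedPair u k ∈ ·), matchingTerm r lam A M =
      C (lam u k) * mu r lam ((A.erase u).erase k) := by
  set e := sortedPair u k
  have hlam : lam e.1 e.2 = lam u k := apply_sortedPair hsym
  by_cases h0 : lam u k = 0
  · rw [h0, C_0, zero_mul]
    refine sum_eq_zero fun M hM => absurd hlam ?_
    obtain ⟨hM, heM⟩ := mem_filter.1 hM
    rw [h0]
    exact ((mem_matchings.1 hM).1 e heM).2.1
  obtain ⟨hku, hkA⟩ := mem_erase.1 hk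
  have he : IsMatching lam A {e} := by
    refine ⟨fun f hf => ?_, fun f hf g hg hfg => ?_⟩
    · rw [mem_singleton.1 hf, hlam]
      refine ⟨sortedPair_fst_lt_snd hku.symm, h0, ?_, ?_⟩ <;>
        rcases le_total u k with h | h <;> simp [e, sortedPair, h, hu, hkA]
    · exact absurd ((mem_singleton.1 hf).trans (mem_singleton.1 hg).symm) hfg
  rw [sum_matchings_filter_mem _ he, erase_erase_sortedPair, mu, mul_sum]
  refine sum_congr rfl fun M hM => ?_
  have heM : e ∉ M := fun h => by
    have := ((mem_matchings.1 hM).1 e h).2.2.1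
    rcases le_total u k with h | h <;> simp [e, sortedPair, h] at this
  rw [matchingTerm, mVerts_insert, sdiff_insert, sdiff_insert, ← erase_sdiff_comm,
    ← erase_sdiff_comm, erase_right_comm, erase_erase_sortedPair, prod_insert heM, hlam, C_mul]
  ring

lemma mu_eq_X_sub_C_mul_add_sum (hsym : ∀ j k, lam j k = lam k j) (hu : u ∈ A) :
    mu r lam A = (X - C (r u)) * mu r lam (A.erase u) +
      ∑ k ∈ A.erase u, C (lam u k) * mu r lam ((A.erase u).erase k) := by
  rw [mu_eq_sum_matchingTerm, ← sum_filter_not_add_sum_filter _ (u ∈ mVerts ·),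
    sum_matchingTerm_filter_not_mem_mVerts hu, filter_mem_mVerts_eq_biUnion,
    sum_biUnion pairwiseDisjoint_filter_mem_sortedPair]
  congr 1
  exact sum_congr rfl fun k hk => sum_matchingTerm_filter_mem_sortedPair hsym hu hk

end Recurrence

section MatchingPolynomial

variable {n : ℕ} {r : Fin n → ℝ} {lam : Fin n → Fin n → ℝ} {A : Finset (Fin n)}

lemma derivative_mu : derivative (mu r lam A) = ∑ j ∈ A, mu r lam (A.erase j) := by
  have hterm : ∀ M, derivative (matchingTerm r lam A M) =
      ∑ j ∈ A, if j ∉ mVerts M then matchingTerm r lam (A.erase j) M else 0 := by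
    intro M
    rw [matchingTerm, derivative_mul, derivative_C, mul_zero, add_zero, derivative_prod_finset,
      sum_mul, ← sum_filter, ← sdiff_eq_filter]
    refine sum_congr rfl fun j _ => ?_
    rw [matchingTerm, derivative_X_sub_C, mul_one, erase_sdiff_comm]
  simp_rw [mu_eq_sum_matchingTerm, derivative_sum, hterm]
  rw [sum_comm]
  exact sum_congr rfl fun j _ => by rw [← sum_filter, matchings_erase]

lemma degree_matchingTerm_lt {M : Finset (Fin n × Fin n)} (hM : M ∈ matchings lam A)
    (hne : M ≠ ∅) : (matchingTerm r lam A M).degree < A.card := by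
  obtain ⟨e, he⟩ := nonempty_iff_ne_empty.2 hne
  have hv : e.1 ∈ mVerts M := mem_mVerts.2 ⟨e, he, Or.inl rfl⟩
  have hlt : (A \ mVerts M).card < A.card :=
    card_lt_card ⟨sdiff_subset, fun h =>
      (mem_sdiff.1 (h ((mem_matchings.1 hM).mem_of_mem_mVerts hv))).2 hv⟩
  calc (matchingTerm r lam A M).degree
      ≤ (∏ i ∈ A \ mVerts M, (X - C (r i))).degree := by
        rw [matchingTerm]
        exact (degree_mul_le _ _).trans (add_le_of_nonpos_right degree_C_le)
    _ = (A \ mVerts M).card := by simp [degree_prod]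
    _ < A.card := by exact_mod_cast hlt

lemma mu_monic : (mu r lam A).Monic := by
  rw [mu_eq_sum_matchingTerm, ← add_sum_erase _ _ empty_mem_matchings]
  have hmonic : (matchingTerm r lam A ∅).Monic := by
    simpa [matchingTerm, mVerts] using monic_prod_of_monic _ _ fun i _ => monic_X_sub_C (r i)
  have hdeg : (matchingTerm r lam A ∅).degree = A.card := by
    simp [matchingTerm, mVerts, degree_prod]
  refine hmonic.add_of_left (lt_of_le_of_lt (degree_sum_le _ _) ?_)
  rw [hdeg, Finset.sup_lt_iff (WithBot.bot_lt_coe _)]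
  exact fun M hM => degree_matchingTerm_lt (mem_of_mem_erase hM) (ne_of_mem_erase hM)

end MatchingPolynomial

namespace Polynomial

lemma wronskian_C_mul_right {R : Type*} [CommRing R] (c : R) (a b : R[X]) :
    wronskian a (C c * b) = C c * wronskian a b := by
  simp only [wronskian, derivative_mul, derivative_C, zero_mul, zero_add]
  ring

lemma wronskian_X_sub_C_mul_self {R : Type*} [CommRing R] (c : R) (a : R[X]) :
    wronskian a ((X - C c) * a) = a ^ 2 := by
  simp only [wronskian, derivative_mul, derivative_X_sub_C, one_mul]
  ring

lemma pow_dvd_wronskian {R : Type*} [CommRing R] {q a b : R[X]} {k : ℕ} (ha : q ^ k ∣ a)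
    (hb : q ^ (k + 2) ∣ b) : q ^ (2 * k + 1) ∣ wronskian a b := by
  refine dvd_sub ?_ ?_
  · have := mul_dvd_mul ha (pow_sub_one_dvd_derivative_of_pow_dvd hb)
    rwa [← pow_add, show k + (k + 2 - 1) = 2 * k + 1 by omega] at this
  · have := mul_dvd_mul (pow_sub_one_dvd_derivative_of_pow_dvd ha) hb
    rw [← pow_add] at this
    exact (pow_dvd_pow q (by omega)).trans this

/-- Dividing `Q² ≤ W` by `(x - θ)^{2m}` and letting `x → θ` would give `g(θ)² ≤ 0` for the
cofactor `g` of `Q`. -/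
lemma not_pow_dvd_of_sq_eval_le {Q W : ℝ[X]} (hQ : Q ≠ 0) (hle : ∀ x, Q.eval x ^ 2 ≤ W.eval x)
    (θ : ℝ) : ¬ (X - C θ) ^ (2 * Q.rootMultiplicity θ + 1) ∣ W := by
  rintro ⟨h, hW⟩
  set m := Q.rootMultiplicity θ
  set g := Q /ₘ (X - C θ) ^ m
  have hQg : Q = (X - C θ) ^ m * g := (pow_mul_divByMonic_rootMultiplicity_eq Q θ).symm
  have hoff : {θ}ᶜ ⊆ {x | g.eval x ^ 2 ≤ (x - θ) * h.eval x} := by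
    intro x hx
    have hpos : 0 < ((x - θ) ^ m) ^ 2 := by
      have : x - θ ≠ 0 := sub_ne_zero.2 hx
      positivity
    have := hle x
    rw [hQg, hW] at this
    simp only [eval_mul, eval_pow, eval_sub, eval_X, eval_C] at this
    refine le_of_mul_le_mul_left ?_ hpos
    linear_combination this
  have hclosed : IsClosed {x | g.eval x ^ 2 ≤ (x - θ) * h.eval x} :=
    isClosed_le (by fun_prop) (by fun_prop)
  have hθ := hclosed.closure_subset_iff.2 hoff
    ((dense_compl_singleton θ).closure_eq ▸ Set.mem_univ θ)
  simp only [Set.mem_ofPred_eq, sub_self, zero_mul] at hθ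
  exact eval_divByMonic_pow_rootMultiplicity_ne_zero θ hQ (pow_eq_zero_iff two_ne_zero |>.1
    (le_antisymm hθ (sq_nonneg _)))

lemma rootMultiplicity_le_of_sq_eval_le_wronskian {P p : ℝ[X]} (hP : P ≠ 0)
    (hle : ∀ x, P.eval x ^ 2 ≤ (wronskian P p).eval x) (θ : ℝ) :
    p.rootMultiplicity θ ≤ P.rootMultiplicity θ + 1 := by
  by_contra! hlt
  refine not_pow_dvd_of_sq_eval_le hP hle θ (pow_dvd_wronskian (pow_rootMultiplicity_dvd P θ) ?_)
  exact (pow_dvd_pow _ hlt).trans (pow_rootMultiplicity_dvd p θ)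

lemma not_pow_rootMultiplicity_dvd_derivative {K : Type*} [Field K] [CharZero K] {p : K[X]}
    {θ : K} (hp : p ≠ 0) (hroot : p.IsRoot θ) :
    ¬ (X - C θ) ^ p.rootMultiplicity θ ∣ derivative p := by
  intro hdvd
  have hderiv : derivative p ≠ 0 := fun h0 => by
    rw [eq_C_of_derivative_eq_zero h0, IsRoot, eval_C] at hroot
    exact hp (by rw [eq_C_of_derivative_eq_zero h0, hroot, C_0])
  have := (le_rootMultiplicity_iff hderiv).2 hdvd
  rw [derivative_rootMultiplicity_of_root hroot] at this
  have := (rootMultiplicity_pos hp).2 hroot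
  omega

end Polynomial

section Interlacing

variable {n : ℕ} {r : Fin n → ℝ} {lam : Fin n → Fin n → ℝ} {A : Finset (Fin n)} {u : Fin n}

lemma wronskian_mu_erase (hsym : ∀ j k, lam j k = lam k j) (hu : u ∈ A) :
    wronskian (mu r lam (A.erase u)) (mu r lam A) = mu r lam (A.erase u) ^ 2 +
      ∑ k ∈ A.erase u, C (-lam u k) *
        wronskian (mu r lam ((A.erase u).erase k)) (mu r lam (A.erase u)) := by
  rw [mu_eq_X_sub_C_mul_add_sum hsym hu, wronskian_add_right, wronskian_X_sub_C_mul_self,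
    ← wronskianBilin_apply, map_sum]
  refine congrArg _ (sum_congr rfl fun k _ => ?_)
  rw [wronskianBilin_apply, wronskian_C_mul_right, ← wronskian_neg_eq, map_neg, mul_neg, neg_mul]

lemma sq_eval_le_eval_wronskian_mu (hsym : ∀ j k, lam j k = lam k j)
    (hnonpos : ∀ j k, lam j k ≤ 0) (hu : u ∈ A) (x : ℝ) :
    (mu r lam (A.erase u)).eval x ^ 2 ≤ (wronskian (mu r lam (A.erase u)) (mu r lam A)).eval x := by
  induction A using Finset.strongInduction generalizing u with
  | H A ih =>
    rw [wronskian_mu_erase hsym hu, eval_add, eval_pow, le_add_iff_nonneg_right, eval_finsetSum]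
    refine sum_nonneg fun k hk => ?_
    rw [eval_mul, eval_C]
    exact mul_nonneg (neg_nonneg.2 (hnonpos u k))
      ((sq_nonneg _).trans (ih _ (erase_ssubset hu) hk))

lemma rootMultiplicity_mu_le_erase_add_one (hsym : ∀ j k, lam j k = lam k j)
    (hnonpos : ∀ j k, lam j k ≤ 0) (hu : u ∈ A) (θ : ℝ) :
    (mu r lam A).rootMultiplicity θ ≤ (mu r lam (A.erase u)).rootMultiplicity θ + 1 :=
  rootMultiplicity_le_of_sq_eval_le_wronskian mu_monic.ne_zero
    (sq_eval_le_eval_wronskian_mu hsym hnonpos hu) θ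

lemma isRoot_mu_iff_exists_essential (hsym : ∀ j k, lam j k = lam k j)
    (hnonpos : ∀ j k, lam j k ≤ 0) (θ : ℝ) :
    (mu r lam A).IsRoot θ ↔ ∃ j ∈ A,
      (mu r lam A).rootMultiplicity θ = (mu r lam (A.erase j)).rootMultiplicity θ + 1 := by
  refine ⟨fun hroot => ?_, fun ⟨j, _, hj⟩ => (rootMultiplicity_pos mu_monic.ne_zero).1 (by omega)⟩
  by_contra! hnone
  refine not_pow_rootMultiplicity_dvd_derivative mu_monic.ne_zero hroot ?_
  rw [derivative_mu]
  refine dvd_sum fun j hj => (pow_dvd_pow _ ?_).trans (pow_rootMultiplicity_dvd _ θ)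
  have := rootMultiplicity_mu_le_erase_add_one (r := r) hsym hnonpos hj θ
  have := hnone j hj
  omega

end Interlacing

theorem stmt_7_general (n : ℕ) (r : Fin n → ℝ) (lam : Fin n → Fin n → ℝ)
    (hsym : ∀ j k, lam j k = lam k j) (hnonpos : ∀ j k, lam j k ≤ 0) (θ : ℝ) :
    (mu r lam (Finset.univ : Finset (Fin n))).IsRoot θ ↔
      ∃ j : Fin n, (mu r lam Finset.univ).rootMultiplicity θ =
        (mu r lam (Finset.univ.erase j)).rootMultiplicity θ + 1 := by
  simpa using isRoot_mu_iff_exists_essential (r := r) (A := univ) hsym hnonpos θ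

/-- `θ` is a root of `μ(G)` iff there is a θ-essential vertex, i.e. a vertex
`j` with `m_θ(G∖j) = m_θ(G) − 1`. -/
theorem stmt_7 (n : ℕ) (hn : 0 < n) (r : Fin n → ℝ) (lam : Fin n → Fin n → ℝ)
    (hsym : ∀ j k, lam j k = lam k j) (hnonpos : ∀ j k, lam j k ≤ 0)
    (hdiag : ∀ i, lam i i = 0) (θ : ℝ) :
    (mu r lam (Finset.univ : Finset (Fin n))).IsRoot θ ↔
      ∃ j : Fin n, (mu r lam Finset.univ).rootMultiplicity θ =
        (mu r lam (Finset.univ.erase j)).rootMultiplicity θ + 1 :=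
  stmt_7_general n r lam hsym hnonpos θ
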